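/- arXiv:1806.02189 — 7 statements merged into one kernel-verified Lean document; each statement's English description precedes it below -/
import Mathlib

section
/- Let R be a 2-torsion free ring, Ξ : R → R a generalized Jordan derivation with relating Jordan derivation τ. Then Ξ(aba) = Ξ(a)ba + aτ(b)a + abτ(a) for all a, b ∈ R. -/
/-- If `R` is a 2-torsion free ring, `Ξ` a generalized Jordan derivation with relating
Jordan derivation `τ`, then `Ξ(aba) = Ξ(a)ba + aτ(b)a + abτ(a)`. -/
theorem stmt_1 {R : Type*} [Ring R]
    (h2 : ∀ x : R, x + x = 0 → x = 0)
    (Ξ τ : R → R)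
    (hΞadd : ∀ a b : R, Ξ (a + b) = Ξ a + Ξ b)
    (hτadd : ∀ a b : R, τ (a + b) = τ a + τ b)
    (hτ : ∀ a : R, τ (a * a) = τ a * a + a * τ a)
    (hΞ : ∀ a : R, Ξ (a * a) = Ξ a * a + a * τ a) :
    ∀ a b : R, Ξ (a * b * a) = Ξ a * b * a + a * τ b * a + a * b * τ a := by
  -- linearized Jordan derivation identity for τ
  have Lτ : ∀ x y : R, τ (x * y + y * x) =
      τ x * y + x * τ y + τ y * x + y * τ x := by
    intro x y
    have e := hτ (x + y)
    rw [show (x + y) * (x + y) = x * x + (x * y + y * x) + (y * y) by noncomm_ring,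
      hτadd (x*x + (x*y+y*x)) (y*y), hτadd (x*x) (x*y+y*x), hτ x, hτ y, hτadd x y] at e
    linear_combination (norm := noncomm_ring) e
  -- linearized identity for Ξ
  have LΞ : ∀ x y : R, Ξ (x * y + y * x) =
      Ξ x * y + x * τ y + Ξ y * x + y * τ x := by
    intro x y
    have e := hΞ (x + y)
    rw [show (x + y) * (x + y) = x * x + (x * y + y * x) + (y * y) by noncomm_ring,
      hΞadd (x*x + (x*y+y*x)) (y*y), hΞadd (x*x) (x*y+y*x), hΞ x, hΞ y, hτadd x y, hΞadd x y] at e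
    linear_combination (norm := noncomm_ring) e
  intro a b
  have key : Ξ (a * (a * b + b * a) + (a * b + b * a) * a) =
      Ξ a * (a * b + b * a) + a * τ (a * b + b * a)
        + Ξ (a * b + b * a) * a + (a * b + b * a) * τ a := LΞ a (a * b + b * a)
  have lhs : Ξ (a * (a * b + b * a) + (a * b + b * a) * a) =
      Ξ (a * a * b + b * (a * a)) + (Ξ (a * b * a) + Ξ (a * b * a)) := by
    rw [show a * (a * b + b * a) + (a * b + b * a) * a =
        (a * a * b + b * (a * a)) + (a * b * a + a * b * a) by noncomm_ring,
      hΞadd (a*a*b + b*(a*a)) (a*b*a + a*b*a), hΞadd (a*a*b) (b*(a*a)), hΞadd (a*b*a) (a*b*a), ← hΞadd (a*a*b) (b*(a*a))]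
  rw [lhs, LΞ (a * a) b, LΞ a b, Lτ a b, hΞ a, hτ a] at key
  have key2 : (Ξ (a * b * a) - (Ξ a * b * a + a * τ b * a + a * b * τ a))
      + (Ξ (a * b * a) - (Ξ a * b * a + a * τ b * a + a * b * τ a)) = 0 := by
    linear_combination (norm := noncomm_ring) key
  exact sub_eq_zero.mp (h2 _ key2)
end

section
/- Let R be a 2-torsion free ring, Ξ : R → R a generalized Jordan derivation with relating Jordan derivation τ. Then Ξ(abc + cba) = Ξ(a)bc + aτ(b)c + abτ(c) + Ξ(c)ba + cτ(b)a + cbτ(a) for all a, b, c ∈ R. -/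
private lemma cancel_aux {G : Type*} [AddGroup G] {A B X T : G}
    (h : A + X + B = A + T + B) : X = T :=
  add_left_cancel (add_right_cancel h)

/-- If `R` is a 2-torsion free ring, `Ξ` a generalized Jordan derivation with relating
Jordan derivation `τ`, then
`Ξ(abc + cba) = Ξ(a)bc + aτ(b)c + abτ(c) + Ξ(c)ba + cτ(b)a + cbτ(a)`. -/
theorem stmt_2 {R : Type*} [Ring R]
    (h2 : ∀ x : R, x + x = 0 → x = 0)
    (Ξ τ : R → R)
    (hΞadd : ∀ a b : R, Ξ (a + b) = Ξ a + Ξ b)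
    (hτadd : ∀ a b : R, τ (a + b) = τ a + τ b)
    (hτ : ∀ a : R, τ (a * a) = τ a * a + a * τ a)
    (hΞ : ∀ a : R, Ξ (a * a) = Ξ a * a + a * τ a) :
    ∀ a b c : R, Ξ (a * b * c + c * b * a) =
      Ξ a * b * c + a * τ b * c + a * b * τ c +
      Ξ c * b * a + c * τ b * a + c * b * τ a := by
  -- polarized Jordan identity for τ
  have polτ : ∀ a b : R, τ (a * b + b * a)
      = τ a * b + a * τ b + τ b * a + b * τ a := by
    intro a b
    have h1 := hτ (a + b)
    rw [show (a + b) * (a + b) = a * a + (a * b + b * a) + b * b by noncomm_ring,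
      hτadd (a * a + (a * b + b * a)) (b * b), hτadd (a * a) (a * b + b * a),
      hτ a, hτ b, hτadd a b] at h1
    have h3 : (τ a * a + a * τ a) + τ (a * b + b * a) + (τ b * b + b * τ b)
        = (τ a * a + a * τ a) + (τ a * b + a * τ b + τ b * a + b * τ a)
          + (τ b * b + b * τ b) := by exact h1.trans (by noncomm_ring)
    exact cancel_aux h3
  -- polarized Jordan identity for Ξ
  have polΞ : ∀ a b : R, Ξ (a * b + b * a)
      = Ξ a * b + a * τ b + Ξ b * a + b * τ a := by
    intro a b
    have h1 := hΞ (a + b)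
    rw [show (a + b) * (a + b) = a * a + (a * b + b * a) + b * b by noncomm_ring,
      hΞadd (a * a + (a * b + b * a)) (b * b), hΞadd (a * a) (a * b + b * a),
      hΞ a, hΞ b, hΞadd a b, hτadd a b] at h1
    have h3 : (Ξ a * a + a * τ a) + Ξ (a * b + b * a) + (Ξ b * b + b * τ b)
        = (Ξ a * a + a * τ a) + (Ξ a * b + a * τ b + Ξ b * a + b * τ a)
          + (Ξ b * b + b * τ b) := by exact h1.trans (by noncomm_ring)
    exact cancel_aux h3
  -- Ξ(aba) formula
  have aba : ∀ a b : R, Ξ (a * b * a)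
      = Ξ a * b * a + a * τ b * a + a * b * τ a := by
    intro a b
    have h1 := polΞ a (a * b + b * a)
    rw [polτ a b, polΞ a b,
      show a * (a * b + b * a) + (a * b + b * a) * a
        = (a * a * b + b * (a * a)) + (a * b * a + a * b * a) by noncomm_ring,
      hΞadd (a * a * b + b * (a * a)) (a * b * a + a * b * a),
      hΞadd (a * b * a) (a * b * a),
      polΞ (a * a) b, hΞ a, hτ a] at h1
    have h3 : ((Ξ a * a + a * τ a) * b + a * a * τ b + Ξ b * (a * a)
          + b * (τ a * a + a * τ a))
        + (Ξ (a * b * a) + Ξ (a * b * a))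
        = ((Ξ a * a + a * τ a) * b + a * a * τ b + Ξ b * (a * a)
          + b * (τ a * a + a * τ a))
        + ((Ξ a * b * a + a * τ b * a + a * b * τ a)
          + (Ξ a * b * a + a * τ b * a + a * b * τ a)) :=
      h1.trans (by noncomm_ring)
    have h4 := add_left_cancel h3
    have h5 : (Ξ (a * b * a) - (Ξ a * b * a + a * τ b * a + a * b * τ a))
        + (Ξ (a * b * a) - (Ξ a * b * a + a * τ b * a + a * b * τ a)) = 0 := by
      rw [← sub_eq_zero] at h4; rw [← h4]; abel
    exact sub_eq_zero.mp (h2 _ h5)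
  -- polarize aba
  intro a b c
  have h1 := aba (a + c) b
  rw [show (a + c) * b * (a + c)
      = a * b * a + (a * b * c + c * b * a) + c * b * c by noncomm_ring,
    hΞadd (a * b * a + (a * b * c + c * b * a)) (c * b * c),
    hΞadd (a * b * a) (a * b * c + c * b * a),
    aba a b, aba c b, hΞadd a c, hτadd a c] at h1
  have h3 : (Ξ a * b * a + a * τ b * a + a * b * τ a)
      + Ξ (a * b * c + c * b * a)
      + (Ξ c * b * c + c * τ b * c + c * b * τ c)
      = (Ξ a * b * a + a * τ b * a + a * b * τ a)
      + (Ξ a * b * c + a * τ b * c + a * b * τ c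
        + Ξ c * b * a + c * τ b * a + c * b * τ a)
      + (Ξ c * b * c + c * τ b * c + c * b * τ c) := by
    exact h1.trans (by noncomm_ring)
  exact cancel_aux h3
end

section
/- Let R be a 2-torsion free ring and τ : R → R a Jordan derivation. If a, b ∈ R satisfy ab = ba = 0, then aτ(b)a = 0. -/
/-- If `R` is a 2-torsion free ring, `τ` a Jordan derivation and `ab = ba = 0`,
then `aτ(b)a = 0`. -/
theorem stmt_3 {R : Type*} [Ring R]
    (h2 : ∀ x : R, x + x = 0 → x = 0)
    (τ : R → R)
    (hτadd : ∀ a b : R, τ (a + b) = τ a + τ b)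
    (hτ : ∀ a : R, τ (a * a) = τ a * a + a * τ a) :
    ∀ a b : R, a * b = 0 → b * a = 0 → a * τ b * a = 0 := by
  -- τ 0 = 0
  have hτ0 : τ 0 = 0 := by
    have h := hτadd 0 0
    rw [add_zero] at h
    have := congrArg (· - τ 0) h
    simpa using this.symm
  -- linearized Jordan identity
  have lin : ∀ x y : R, τ (x * y + y * x)
      = τ x * y + x * τ y + τ y * x + y * τ x := by
    intro x y
    have h := hτ (x + y)
    have e : (x + y) * (x + y) = x * x + (x * y + y * x) + y * y := by
      noncomm_ring
    rw [e, hτadd, hτadd, hτ x, hτ y, hτadd x y] at h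
    linear_combination (norm := noncomm_ring) h
  -- Herstein's identity (doubled): 2 τ(xyx) = 2 (τx·yx + x·τy·x + xy·τx)
  have key : ∀ x y : R, τ (x * y * x) + τ (x * y * x)
      = (τ x * (y * x) + x * (τ y * x) + x * (y * τ x))
        + (τ x * (y * x) + x * (τ y * x) + x * (y * τ x)) := by
    intro x y
    have l1 := lin x (x * y + y * x)
    have l2 := lin x y
    have l3 := lin (x * x) y
    have e1 : x * (x * y + y * x) + (x * y + y * x) * x
        = (x * x * y + y * (x * x)) + (x * y * x + x * y * x) := by
      noncomm_ring
    rw [e1, hτadd, l3, hτadd] at l1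
    rw [hτ x] at l1
    rw [l2] at l1
    linear_combination (norm := noncomm_ring) l1
  intro a b hab hba
  have k := key a b
  rw [hab, hba, zero_mul, hτ0] at k
  have e : a * (b * τ a) = 0 := by rw [← mul_assoc, hab, zero_mul]
  have k2 : a * τ b * a + a * τ b * a = 0 := by
    linear_combination (norm := noncomm_ring) -k - e - e
  exact h2 _ k2
end

section
/- Let R be a 2-torsion free ring and τ : R → R a Jordan derivation. If e ∈ R is an idempotent and a ∈ R satisfies ea = ae = 0, then eτ(a)e = 0. -/
/-- If `R` is a 2-torsion free ring, `τ` a Jordan derivation, `e` an idempotent and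
`ea = ae = 0`, then `eτ(a)e = 0`. -/
theorem stmt_5 {R : Type*} [Ring R]
    (h2 : ∀ x : R, x + x = 0 → x = 0)
    (τ : R → R)
    (hτadd : ∀ a b : R, τ (a + b) = τ a + τ b)
    (hτ : ∀ a : R, τ (a * a) = τ a * a + a * τ a) :
    ∀ e a : R, e * e = e → e * a = 0 → a * e = 0 → e * τ a * e = 0 := by
  intro e a he hea hae
  have h1 := hτ (e + a)
  have hsq : (e + a) * (e + a) = e * e + a * a := by
    rw [add_mul, mul_add, mul_add, hea, hae]
    abel
  rw [hsq, hτadd, hτ e, hτ a, hτadd] at h1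
  have key : τ e * a + τ a * e + e * τ a + a * τ e = 0 := by
    have expand : (τ e + τ a) * (e + a) + (e + a) * (τ e + τ a)
        = (τ e * e + e * τ e) + (τ a * a + a * τ a)
          + (τ e * a + τ a * e + e * τ a + a * τ e) := by noncomm_ring
    rw [expand] at h1
    exact left_eq_add.mp h1
  have h3 : e * (τ e * a + τ a * e + e * τ a + a * τ e) * e = 0 := by
    rw [key, mul_zero, zero_mul]
  have h4 : e * τ a * e + e * τ a * e = 0 := by
    have : e * (τ e * a + τ a * e + e * τ a + a * τ e) * e
        = e * τ e * (a * e) + e * τ a * (e * e) + e * e * (τ a * e) + e * a * (τ e * e) := by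
      noncomm_ring
    rw [this, hae, hea, he] at h3
    simpa [mul_assoc] using h3
  exact h2 _ h4
end

section
/- Let R be a 2-torsion free ring, Ξ : R → R a generalized Jordan derivation with relating Jordan derivation τ. If e ∈ R is an idempotent and a ∈ R satisfies ea = ae = 0, then Ξ(a)e + aτ(e) = 0 and Ξ(e)a + eτ(a) = 0. -/
/-- If `R` is a 2-torsion free ring, `Ξ` a generalized Jordan derivation with relating
Jordan derivation `τ`, `e` an idempotent and `ea = ae = 0`, then
`Ξ(a)e + aτ(e) = 0` and `Ξ(e)a + eτ(a) = 0`. -/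
theorem stmt_6 {R : Type*} [Ring R]
    (h2 : ∀ x : R, x + x = 0 → x = 0)
    (Ξ τ : R → R)
    (hΞadd : ∀ a b : R, Ξ (a + b) = Ξ a + Ξ b)
    (hτadd : ∀ a b : R, τ (a + b) = τ a + τ b)
    (hτ : ∀ a : R, τ (a * a) = τ a * a + a * τ a)
    (hΞ : ∀ a : R, Ξ (a * a) = Ξ a * a + a * τ a) :
    ∀ e a : R, e * e = e → e * a = 0 → a * e = 0 →
      Ξ a * e + a * τ e = 0 ∧ Ξ e * a + e * τ a = 0 := by
  intro e a he hea hae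
  have hτe : τ e = τ e * e + e * τ e := by
    have h := hτ e; rw [he] at h; exact h
  have hΞe : Ξ e = Ξ e * e + e * τ e := by
    have h := hΞ e; rw [he] at h; exact h
  have hsq : (a + e) * (a + e) = a * a + e := by
    rw [add_mul, mul_add, mul_add, hea, hae, he]; abel
  -- linearized Jordan derivation identity
  have hT0 := hτ (a + e)
  rw [hsq, hτadd, hτadd] at hT0
  have hT : τ a * e + τ e * a + a * τ e + e * τ a = 0 := by
    have key : τ a * e + τ e * a + a * τ e + e * τ a
        = ((τ a + τ e) * (a + e) + (a + e) * (τ a + τ e))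
          - (τ a * a + a * τ a) - (τ e * e + e * τ e) := by noncomm_ring
    rw [key, ← hT0, ← hτ a, ← hτe]; abel
  -- linearized generalized Jordan derivation identity
  have hX0 := hΞ (a + e)
  rw [hsq, hΞadd, hΞadd, hτadd] at hX0
  have hXY : Ξ a * e + a * τ e + (Ξ e * a + e * τ a) = 0 := by
    have key : Ξ a * e + a * τ e + (Ξ e * a + e * τ a)
        = ((Ξ a + Ξ e) * (a + e) + (a + e) * (τ a + τ e))
          - (Ξ a * a + a * τ a) - (Ξ e * e + e * τ e) := by noncomm_ring
    rw [key, ← hX0, ← hΞ a, ← hΞe]; abel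
  -- e τ(a) e = 0
  have h1 : ∀ x : R, e * (a * x) = 0 := fun x => by rw [← mul_assoc, hea, zero_mul]
  have h2' : ∀ x : R, e * (e * x) = e * x := fun x => by rw [← mul_assoc, he]
  have heτae : e * τ a * e = 0 := by
    apply h2
    have expand : e * (τ a * e + τ e * a + a * τ e + e * τ a) * e
        = e * τ a * e + e * τ a * e := by
      simp only [mul_add, add_mul, mul_assoc, he, hae, hea, mul_zero, zero_mul,
        add_zero, zero_add, h1, h2']
    rw [← expand, hT, mul_zero, zero_mul]
  -- a τ(e) = a τ(e) e
  have haτe : a * τ e = a * τ e * e := by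
    conv_lhs => rw [hτe]
    rw [mul_add, ← mul_assoc, ← mul_assoc, hae, zero_mul, add_zero]
  -- multiply hXY on the right by e
  have hXe : Ξ a * e + a * τ e = 0 := by
    have h := congrArg (fun x => x * e) hXY
    simp only [add_mul, zero_mul, mul_assoc] at h
    rw [he, hae] at h
    simp only [mul_zero, add_zero] at h
    -- h : Ξ a * e + a * (τ e * e) + e * (τ a * e) = 0  (roughly)
    rw [← mul_assoc, ← mul_assoc, heτae, add_zero, ← haτe, add_zero] at h
    exact h
  refine ⟨hXe, ?_⟩
  rw [hXe, zero_add] at hXY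
  exact hXY
end

section
/- Let R be a 2-torsion free commutative ring with identity and n ≥ 1. Then every generalized Jordan derivation of the full matrix algebra Mₙ(R) is a generalized derivation. That is, if Ξ : Mₙ(R) → Mₙ(R) is R-linear and there exists an R-linear Jordan derivation τ with Ξ(a²) = Ξ(a)a + aτ(a) for all a, then there exists a derivation d : Mₙ(R) → Mₙ(R) with Ξ(ab) = Ξ(a)b + a d(b) for all a, b ∈ Mₙ(R). -/
/-!
A Jordan derivation of a 2-torsion free ring also satisfies `σ(aba) = σ(a)ba + aσ(b)a + abσ(a)`
and its linearization in `a`. On `Mₙ(R)`, subtracting the inner derivation of the matrix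
`s a b = τ(E_bb) a b` leaves a Jordan derivation `σ` vanishing on the diagonal units `E_kk`.
Sandwiching between the `E_kk` then shows `σ(E_ij) ∈ R E_ij` and the Leibniz rule on products
of matrix units, hence everywhere, so `τ` is a derivation. Finally `Ξ(b) = Ξ(1) b + τ(b)`, and a
map of this form with `τ` a derivation is a generalized derivation.
-/

open Matrix

section Derivations

variable {A : Type*} [Ring A]

def IsDerivation (d : A → A) : Prop :=
  ∀ a b, d (a * b) = d a * b + a * d b

def IsJordanDerivation (σ : A → A) : Prop :=
  ∀ a, σ (a * a) = σ a * a + a * σ a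

def IsGeneralizedDerivation (Ξ d : A → A) : Prop :=
  ∀ a b, Ξ (a * b) = Ξ a * b + a * d b

def IsGeneralizedJordanDerivation (Ξ τ : A → A) : Prop :=
  ∀ a, Ξ (a * a) = Ξ a * a + a * τ a

theorem IsDerivation.add {d δ : A → A} (hd : IsDerivation d) (hδ : IsDerivation δ) :
    IsDerivation (d + δ) := by
  intro a b
  simp only [Pi.add_apply, hd a b, hδ a b]
  noncomm_ring

theorem IsJordanDerivation.sub {σ δ : A → A} (hσ : IsJordanDerivation σ) (hδ : IsDerivation δ) :
    IsJordanDerivation (σ - δ) := by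
  intro a
  simp only [Pi.sub_apply, hσ a, hδ a a]
  noncomm_ring

namespace IsJordanDerivation

variable {F : Type*} [FunLike F A A] [AddMonoidHomClass F A A] {σ : F}

theorem map_mul_add_mul (hσ : IsJordanDerivation σ) (a b : A) :
    σ (a * b + b * a) = σ a * b + a * σ b + σ b * a + b * σ a := by
  have h := hσ (a + b)
  simp only [add_mul, mul_add, map_add, hσ a, hσ b] at h
  rw [map_add]
  linear_combination (norm := skip) h
  noncomm_ring

variable (h2 : ∀ x : A, x + x = 0 → x = 0)
include h2

theorem map_sandwich (hσ : IsJordanDerivation σ) (a b : A) :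
    σ (a * b * a) = σ a * b * a + a * σ b * a + a * b * σ a := by
  have hX := hσ.map_mul_add_mul a (a * b + b * a)
  have hY := hσ.map_mul_add_mul (a * a) b
  rw [hσ.map_mul_add_mul a b] at hX
  rw [hσ a] at hY
  have e : a * (a * b + b * a) + (a * b + b * a) * a
      = (a * a * b + b * (a * a)) + (a * b * a + a * b * a) := by
    noncomm_ring
  rw [e, map_add, hY, map_add] at hX
  rw [← sub_eq_zero]
  apply h2
  linear_combination (norm := skip) hX
  noncomm_ring

theorem map_jordanTriple (hσ : IsJordanDerivation σ) (a b c : A) :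
    σ (a * b * c + c * b * a) = σ a * b * c + a * σ b * c + a * b * σ c
      + σ c * b * a + c * σ b * a + c * b * σ a := by
  have h := hσ.map_sandwich h2 (a + c) b
  have e : (a + c) * b * (a + c) = a * b * a + (a * b * c + c * b * a) + c * b * c := by
    noncomm_ring
  simp only [e, map_add, hσ.map_sandwich h2 a b, hσ.map_sandwich h2 c b] at h
  rw [map_add]
  linear_combination (norm := skip) h
  noncomm_ring

end IsJordanDerivation
end Derivations

section Generalized

variable {A : Type*} [Ring A] {F : Type*} [FunLike F A A] [AddMonoidHomClass F A A]

theorem IsGeneralizedJordanDerivation.map_eq_map_one_mul_add {Ξ τ : F}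
    (hΞ : IsGeneralizedJordanDerivation Ξ τ) (b : A) : Ξ b = Ξ 1 * b + τ b := by
  have hτ1 : τ 1 = 0 := by simpa using hΞ 1
  have h := hΞ (1 + b)
  simp only [add_mul, mul_add, one_mul, mul_one, map_add, hτ1, hΞ b] at h
  linear_combination (norm := skip) h
  noncomm_ring

theorem IsGeneralizedJordanDerivation.isGeneralizedDerivation {Ξ τ : F}
    (hΞ : IsGeneralizedJordanDerivation Ξ τ) (hτ : IsDerivation τ) :
    IsGeneralizedDerivation Ξ τ := by
  intro a b
  rw [hΞ.map_eq_map_one_mul_add, hΞ.map_eq_map_one_mul_add a, hτ a b]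
  noncomm_ring

end Generalized

section Algebra

variable {R A : Type*} [CommRing R] [Ring A] [Algebra R A]

variable (R) in
def innerDerivation (s : A) : A →ₗ[R] A :=
  LinearMap.mulLeft R s - LinearMap.mulRight R s

@[simp]
theorem innerDerivation_apply (s x : A) : innerDerivation R s x = s * x - x * s :=
  rfl

theorem isDerivation_innerDerivation (s : A) : IsDerivation (innerDerivation R s) := by
  intro a b
  simp only [innerDerivation_apply]
  noncomm_ring

theorem isDerivation_of_basis {ι : Type*} (b : Module.Basis ι R A) {d : A →ₗ[R] A}
    (h : ∀ i j, d (b i * b j) = d (b i) * b j + b i * d (b j)) : IsDerivation d := by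
  let D : A →ₗ[R] A →ₗ[R] A := (LinearMap.mul R A).compr₂ d - (LinearMap.mul R A).comp d
    - (LinearMap.mul R A).compl₂ d
  have hD : D = 0 := LinearMap.ext_basis b b fun i j => by simp [D, h]
  intro x y
  simpa [D, sub_sub, sub_eq_zero] using LinearMap.congr_fun₂ hD x y

end Algebra

section MatrixUnits

variable {m R : Type*} [Fintype m] [DecidableEq m] [CommRing R]

namespace IsJordanDerivation

variable {σ : Matrix m m R →ₗ[R] Matrix m m R} (hσ : IsJordanDerivation σ)
include hσ

theorem map_single_diag_apply_add_of_ne {i j : m} (hij : i ≠ j) :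
    σ (single i i 1) i j + σ (single j j 1) i j = 0 := by
  have h := congrFun₂ (hσ.map_mul_add_mul (single i i (1 : R)) (single j j 1)) i j
  simpa [hij, hij.symm, eq_comm] using h

theorem map_single_diag_eq_innerDerivation (i : m) :
    σ (single i i 1) = innerDerivation R (of fun a b => σ (single b b 1) a b) (single i i 1) := by
  have h := hσ (single i i (1 : R))
  rw [single_mul_single_same, one_mul] at h
  ext a b
  have hab := congrFun₂ h a b
  by_cases ha : a = i <;> by_cases hb : b = i
  · subst ha hb
    simpa using hab
  · subst ha
    simp only [innerDerivation_apply, Matrix.sub_apply, mul_single_apply_of_ne _ _ _ _ _ hb,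
      single_mul_apply_same, of_apply, one_mul, zero_sub]
    exact eq_neg_of_add_eq_zero_left (hσ.map_single_diag_apply_add_of_ne (Ne.symm hb))
  · subst hb
    simp [ha]
  · simpa [ha, hb] using hab

variable (h2 : ∀ x : Matrix m m R, x + x = 0 → x = 0)
include h2

theorem map_single_apply_swap_of_ne {i j : m} (hij : i ≠ j) : σ (single i j 1) j i = 0 := by
  have h := congrFun₂ (hσ.map_sandwich h2 (single i j (1 : R)) (single j i 1)) j i
  simpa [hij, hij.symm, mul_assoc] using h

theorem map_single_apply_add_map_single_apply (i j : m) :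
    σ (single i j 1) i j + σ (single j i 1) j i = 0 := by
  have h := congrFun₂ (hσ.map_sandwich h2 (single i j (1 : R)) (single j i 1)) i j
  simpa [mul_assoc] using h

variable (hdiag : ∀ k, σ (single k k 1) = 0)
include hdiag

theorem map_single_eq_single (i j : m) : σ (single i j 1) = single i j (σ (single i j 1) i j) := by
  by_cases hij : i = j
  · subst hij
    simp [hdiag]
  have h := hσ.map_jordanTriple h2 (single i i (1 : R)) (single i j 1) (single j j 1)
  simpa [hdiag, Ne.symm hij, hσ.map_single_apply_swap_of_ne h2 hij] using h

theorem map_single_mul_single (i j k l : m) :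
    σ (single i j 1 * single k l 1)
      = σ (single i j 1) * single k l 1 + single i j 1 * σ (single k l 1) := by
  rw [hσ.map_single_eq_single h2 hdiag i j, hσ.map_single_eq_single h2 hdiag k l]
  rcases eq_or_ne j k with rfl | hjk
  · rcases eq_or_ne i l with rfl | hil
    · have := hσ.map_single_apply_add_map_single_apply h2 i j
      simp [hdiag, ← single_add, this]
    · have h := hσ.map_mul_add_mul (single i j (1 : R)) (single j l 1)
      rw [hσ.map_single_eq_single h2 hdiag i j, hσ.map_single_eq_single h2 hdiag j l] at h
      simpa [hil.symm] using h
  · simp [hjk]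

theorem isDerivation_of_map_single_diag_eq_zero : IsDerivation σ :=
  isDerivation_of_basis (stdBasis R m m) fun ⟨i, j⟩ ⟨k, l⟩ => by
    simpa only [stdBasis_eq_single] using hσ.map_single_mul_single h2 hdiag i j k l

end IsJordanDerivation

theorem IsJordanDerivation.isDerivation_matrix (h2 : ∀ x : R, x + x = 0 → x = 0)
    {τ : Matrix m m R →ₗ[R] Matrix m m R} (hτ : IsJordanDerivation τ) : IsDerivation τ := by
  set δ := innerDerivation R (of fun a b => τ (single b b 1) a b)
  have hδ : IsDerivation δ := isDerivation_innerDerivation _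
  have hσ : IsJordanDerivation (τ - δ) := hτ.sub hδ
  have h2' : ∀ x : Matrix m m R, x + x = 0 → x = 0 := fun x hx =>
    ext fun a b => h2 _ (congrFun₂ hx a b)
  have hσd := hσ.isDerivation_of_map_single_diag_eq_zero h2' fun k => by
    simp [δ, ← hτ.map_single_diag_eq_innerDerivation]
  rw [← sub_add_cancel τ δ]
  exact hσd.add hδ

end MatrixUnits

theorem stmt_7_general {R : Type*} [CommRing R]
    (h2 : ∀ x : R, x + x = 0 → x = 0)
    (n : ℕ)
    (Ξ τ : Matrix (Fin n) (Fin n) R →ₗ[R] Matrix (Fin n) (Fin n) R)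
    (hτ : ∀ a, τ (a * a) = τ a * a + a * τ a)
    (hΞ : ∀ a, Ξ (a * a) = Ξ a * a + a * τ a) :
    ∃ d : Matrix (Fin n) (Fin n) R →ₗ[R] Matrix (Fin n) (Fin n) R,
      (∀ a b, d (a * b) = d a * b + a * d b) ∧
      (∀ a b, Ξ (a * b) = Ξ a * b + a * d b) := by
  have hτd : IsDerivation τ := IsJordanDerivation.isDerivation_matrix h2 hτ
  exact ⟨τ, hτd, IsGeneralizedJordanDerivation.isGeneralizedDerivation hΞ hτd⟩

/-- Every generalized Jordan derivation of the full matrix algebra `Mₙ(R)` over a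
2-torsion free commutative ring `R` with identity is a generalized derivation. -/
theorem stmt_7 {R : Type*} [CommRing R]
    (h2 : ∀ x : R, x + x = 0 → x = 0)
    (n : ℕ) (hn : 1 ≤ n)
    (Ξ τ : Matrix (Fin n) (Fin n) R →ₗ[R] Matrix (Fin n) (Fin n) R)
    (hτ : ∀ a, τ (a * a) = τ a * a + a * τ a)
    (hΞ : ∀ a, Ξ (a * a) = Ξ a * a + a * τ a) :
    ∃ d : Matrix (Fin n) (Fin n) R →ₗ[R] Matrix (Fin n) (Fin n) R,
      (∀ a b, d (a * b) = d a * b + a * d b) ∧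
      (∀ a b, Ξ (a * b) = Ξ a * b + a * d b) :=
  stmt_7_general h2 n Ξ τ hτ hΞ
end

section
/- Let R be a 2-torsion free ring, Ξ a generalized Jordan derivation with relating Jordan derivation τ, and e an idempotent of R. Then Ξ(eae) = Ξ(e)ae + eτ(a)e + eaτ(e) for all a ∈ R. -/
/-- If `R` is a 2-torsion free ring, `Ξ` a generalized Jordan derivation with relating
Jordan derivation `τ` and `e` an idempotent, then `Ξ(eae) = Ξ(e)ae + eτ(a)e + eaτ(e)`
for all `a ∈ R`. -/
theorem stmt_10 {R : Type*} [Ring R]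
    (h2 : ∀ x : R, x + x = 0 → x = 0)
    (Ξ τ : R → R)
    (hΞadd : ∀ a b : R, Ξ (a + b) = Ξ a + Ξ b)
    (hτadd : ∀ a b : R, τ (a + b) = τ a + τ b)
    (hτ : ∀ a : R, τ (a * a) = τ a * a + a * τ a)
    (hΞ : ∀ a : R, Ξ (a * a) = Ξ a * a + a * τ a)
    (e : R) (he : e * e = e) :
    ∀ a : R, Ξ (e * a * e) = Ξ e * a * e + e * τ a * e + e * a * τ e := by
  -- linearized Jordan identity for τ
  have Lτ : ∀ a b : R, τ (a * b + b * a)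
      = τ a * b + a * τ b + τ b * a + b * τ a := by
    intro a b
    have h := hτ (a + b)
    have e1 : (a + b) * (a + b) = a * a + (a * b + b * a) + b * b := by noncomm_ring
    rw [hτadd a b, e1, hτadd (a * a + (a * b + b * a)) (b * b),
      hτadd (a * a) (a * b + b * a), hτ a, hτ b] at h
    linear_combination (norm := noncomm_ring) h
  -- linearized identity for Ξ
  have LΞ : ∀ a b : R, Ξ (a * b + b * a)
      = Ξ a * b + a * τ b + Ξ b * a + b * τ a := by
    intro a b
    have h := hΞ (a + b)
    have e1 : (a + b) * (a + b) = a * a + (a * b + b * a) + b * b := by noncomm_ring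
    rw [hΞadd a b, hτadd a b, e1, hΞadd (a * a + (a * b + b * a)) (b * b),
      hΞadd (a * a) (a * b + b * a), hΞ a, hΞ b] at h
    linear_combination (norm := noncomm_ring) h
  intro a
  -- z = e(ea+ae) + (ea+ae)e = (ee)a + 2 eae + a(ee)
  have hz : e * (e * a + a * e) + (e * a + a * e) * e
      = (e * a * e + e * a * e) + ((e * e) * a + a * (e * e)) := by noncomm_ring
  have h1 : Ξ (e * (e * a + a * e) + (e * a + a * e) * e)
      = Ξ (e * a * e) + Ξ (e * a * e) + Ξ ((e * e) * a + a * (e * e)) := by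
    rw [hz, hΞadd, hΞadd]
  have h2' := LΞ e (e * a + a * e)
  rw [Lτ e a, LΞ e a] at h2'
  have h3 := LΞ (e * e) a
  rw [hΞ e, hτ e] at h3
  have key : (Ξ (e * a * e) - (Ξ e * a * e + e * τ a * e + e * a * τ e))
      + (Ξ (e * a * e) - (Ξ e * a * e + e * τ a * e + e * a * τ e)) = 0 := by
    linear_combination (norm := noncomm_ring) h2' - h1 - h3
  have := h2 _ key
  linear_combination (norm := noncomm_ring) this
end
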